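/- arXiv:math/0409350 — 4 statements merged into one kernel-verified Lean document; each statement's English description precedes it below -/
import Mathlib

section
/- In a group G generated by elements ρ1, ρ2 subject to the relations ρ1² = ρ2² and ρ2 ρ1 ρ2⁻¹ = ρ1⁻¹, the map ρ1 ↦ i, ρ2 ↦ j extends to an isomorphism G ≅ Q8. -/
/-- The relations of the presentation ⟨ρ1, ρ2 | ρ1² = ρ2², ρ2 ρ1 ρ2⁻¹ = ρ1⁻¹⟩. -/
def P2rels : Set (FreeGroup (Fin 2)) :=
  { (FreeGroup.of 0) ^ 2 * ((FreeGroup.of 1) ^ 2)⁻¹,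
    FreeGroup.of 1 * FreeGroup.of 0 * (FreeGroup.of 1)⁻¹ * FreeGroup.of 0 }

namespace Stmt7Aux

open QuaternionGroup

abbrev G := PresentedGroup P2rels

def r : G := PresentedGroup.of 0
def s : G := PresentedGroup.of 1

lemma mk_rel_eq_one {x : FreeGroup (Fin 2)} (hx : x ∈ P2rels) :
    PresentedGroup.mk P2rels x = 1 := by
  apply (QuotientGroup.eq_one_iff _).2
  exact Subgroup.subset_normalClosure hx

lemma rel1 : r ^ 2 = s ^ 2 := by
  have h := mk_rel_eq_one (Set.mem_insert _ _)
  simp only [map_mul, map_pow, map_inv] at h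
  exact mul_inv_eq_one.mp h

lemma rel2 : s * r * s⁻¹ = r⁻¹ := by
  have h := mk_rel_eq_one (Set.mem_insert_of_mem _ rfl)
  simp only [map_mul, map_inv] at h
  exact mul_eq_one_iff_eq_inv.mp h

lemma hinv : s * (r⁻¹ * s⁻¹) = r := by
  have h := congrArg Inv.inv rel2
  simpa [mul_assoc] using h

lemma hconj : s⁻¹ * r * s = r⁻¹ := by
  calc s⁻¹ * r * s = s⁻¹ * (s * (r⁻¹ * s⁻¹)) * s := by rw [hinv]
    _ = r⁻¹ := by simp [mul_assoc]

lemma key2 : r ^ 2 = r⁻¹ * r⁻¹ := by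
  have h2 : s * r ^ 2 * s⁻¹ = r⁻¹ * r⁻¹ := by
    have e : s * r ^ 2 * s⁻¹ = (s * r * s⁻¹) * (s * r * s⁻¹) := by
      rw [pow_two]; simp [mul_assoc]
    rw [e, rel2]
  have h3 : s * r ^ 2 * s⁻¹ = r ^ 2 := by
    rw [rel1, pow_two]; simp [mul_assoc]
  exact h3.symm.trans h2

lemma r4nat : r ^ (4 : ℕ) = 1 := by
  have : r ^ (4 : ℕ) = r ^ 2 * r ^ 2 := by rw [← pow_add]
  rw [this]
  nth_rewrite 2 [key2]
  rw [pow_two]; simp [mul_assoc]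

lemma r4 : r ^ (4 : ℤ) = 1 := by
  rw [show (4 : ℤ) = ((4 : ℕ) : ℤ) by norm_num, zpow_natCast, r4nat]

lemma hrz {a b : ℤ} (h : (a : ZMod 4) = (b : ZMod 4)) : r ^ a = r ^ b := by
  have hd : (4 : ℤ) ∣ b - a := by
    have : ((b - a : ℤ) : ZMod 4) = 0 := by push_cast; rw [h]; ring
    exact_mod_cast (ZMod.intCast_zmod_eq_zero_iff_dvd _ 4).mp this
  obtain ⟨k, hk⟩ := hd
  have hb : b = a + 4 * k := by linarith
  rw [hb, zpow_add, zpow_mul, r4, one_zpow, mul_one]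

lemma hc (a : ℤ) : r ^ a * s = s * r ^ (-a) := by
  have h2 : (MulAut.conj s⁻¹) (r ^ a) = r ^ (-a) := by
    have h1 : (MulAut.conj s⁻¹) r = r⁻¹ := by
      simpa [MulAut.conj_apply, mul_assoc] using hconj
    rw [map_zpow, h1, inv_zpow, ← zpow_neg]
  have h3 : s⁻¹ * r ^ a * s = r ^ (-a) := by
    simpa [MulAut.conj_apply, mul_assoc] using h2
  rw [← h3]; simp [mul_assoc]

lemma s2 : s * s = r ^ (2 : ℤ) := by
  rw [show (2 : ℤ) = ((2 : ℕ) : ℤ) by norm_num, zpow_natCast, rel1, pow_two]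

/-- The underlying function of the inverse homomorphism. -/
def gfun : QuaternionGroup 2 → G
  | .a i => r ^ (i.val : ℤ)
  | .xa i => s * r ^ (i.val : ℤ)

lemma castvaln (i : ZMod (2 * 2)) : ((i.val : ℕ) : ZMod 4) = i := by
  rw [ZMod.natCast_val]; exact ZMod.cast_id 4 i

lemma castval (i : ZMod (2 * 2)) : (((i.val : ℤ)) : ZMod 4) = i := by
  exact_mod_cast castvaln i

def g : QuaternionGroup 2 →* G :=
  MonoidHom.mk' gfun (by
    rintro (i | i) (j | j)
    · show gfun (QuaternionGroup.a (i + j)) = _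
      show r ^ (((i + j).val : ℤ)) = r ^ ((i.val : ℤ)) * r ^ ((j.val : ℤ))
      rw [← zpow_add]
      apply hrz
      push_cast [castvaln]; ring
    · show gfun (QuaternionGroup.xa (j - i)) = _
      show s * r ^ (((j - i).val : ℤ)) = r ^ ((i.val : ℤ)) * (s * r ^ ((j.val : ℤ)))
      rw [← mul_assoc, hc, mul_assoc, ← zpow_add]
      congr 1
      apply hrz
      push_cast [castvaln]; ring
    · show gfun (QuaternionGroup.xa (i + j)) = _
      show s * r ^ (((i + j).val : ℤ)) = s * r ^ ((i.val : ℤ)) * r ^ ((j.val : ℤ))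
      rw [mul_assoc, ← zpow_add]
      congr 1
      apply hrz
      push_cast [castvaln]; ring
    · show gfun (QuaternionGroup.a ((2 : ZMod (2*2)) + j - i)) = _
      show r ^ ((((2 : ZMod (2*2)) + j - i).val : ℤ)) =
        s * r ^ ((i.val : ℤ)) * (s * r ^ ((j.val : ℤ)))
      have : s * r ^ ((i.val : ℤ)) * (s * r ^ ((j.val : ℤ)))
          = s * (r ^ ((i.val : ℤ)) * s) * r ^ ((j.val : ℤ)) := by simp [mul_assoc]
      rw [this, hc, ← mul_assoc, s2, ← zpow_add, ← zpow_add]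
      apply hrz
      push_cast [castvaln]
      ring)

def f0 : Fin 2 → QuaternionGroup 2 := ![QuaternionGroup.a 1, QuaternionGroup.xa 0]

lemma hf : ∀ rel ∈ P2rels, FreeGroup.lift f0 rel = 1 := by
  intro rel hrel
  rcases hrel with h | h
  · subst h
    simp only [map_mul, map_pow, map_inv, FreeGroup.lift_apply_of]
    decide
  · rw [Set.mem_singleton_iff] at h
    subst h
    simp only [map_mul, map_inv, FreeGroup.lift_apply_of]
    decide

def f : G →* QuaternionGroup 2 := PresentedGroup.toGroup hf

lemma f_r : f r = QuaternionGroup.a 1 := by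
  show f (PresentedGroup.of 0) = _
  rw [f, PresentedGroup.toGroup.of]
  rfl

lemma f_s : f s = QuaternionGroup.xa 0 := by
  show f (PresentedGroup.of 1) = _
  rw [f, PresentedGroup.toGroup.of]
  rfl

lemma left_inv : ∀ x : G, g (f x) = x := by
  have hcomp : g.comp f = MonoidHom.id G := by
    ext x
    fin_cases x
    · show g (f r) = r
      rw [f_r]
      show gfun (QuaternionGroup.a 1) = r
      show r ^ (((1 : ZMod (2*2)).val : ℤ)) = r
      rw [show (((1 : ZMod (2*2)).val : ℤ)) = 1 by decide, zpow_one]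
    · show g (f s) = s
      rw [f_s]
      show gfun (QuaternionGroup.xa 0) = s
      show s * r ^ (((0 : ZMod (2*2)).val : ℤ)) = s
      rw [show (((0 : ZMod (2*2)).val : ℤ)) = 0 by decide, zpow_zero, mul_one]
  intro x
  exact DFunLike.congr_fun hcomp x

lemma right_inv : ∀ y : QuaternionGroup 2, f (g y) = y := by
  rintro (i | i)
  · show f (r ^ ((i.val : ℤ))) = _
    rw [map_zpow, f_r, zpow_natCast, QuaternionGroup.a_one_pow]
    congr 1
    exact_mod_cast castval i
  · show f (s * r ^ ((i.val : ℤ))) = _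
    rw [map_mul, map_zpow, f_r, f_s, zpow_natCast, QuaternionGroup.a_one_pow,
      QuaternionGroup.xa_mul_a]
    congr 1
    have := castval i
    rw [show (((i.val : ℤ)) : ZMod 4) = ((i.val : ℕ) : ZMod 4) by push_cast; ring] at this
    rw [show ((i.val : ℕ) : ZMod (2*2)) = i from this]
    exact zero_add i

end Stmt7Aux

/-- The group ⟨ρ1, ρ2 | ρ1² = ρ2², ρ2 ρ1 ρ2⁻¹ = ρ1⁻¹⟩ is isomorphic to `Q8`, via
an isomorphism sending ρ1 to `i` and ρ2 to `j`. -/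
theorem stmt_7 :
    ∃ e : PresentedGroup P2rels ≃* QuaternionGroup 2,
      e (PresentedGroup.of 0) = QuaternionGroup.a 1 ∧
      e (PresentedGroup.of 1) = QuaternionGroup.xa 0 := by
  refine ⟨⟨⟨Stmt7Aux.f, Stmt7Aux.g, Stmt7Aux.left_inv, Stmt7Aux.right_inv⟩,
    Stmt7Aux.f.map_mul⟩, ?_, ?_⟩
  · exact Stmt7Aux.f_r
  · exact Stmt7Aux.f_s
end

section
/- In the semidirect product G = F ⋊_φ Q8 as above (a model of P_3(RP²)), the unique element of order 2 is (1, z) where z is the unique involution of Q8, and every element of G of order 4 squares to (1, z). -/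
/-!
Every involution of `Q8` is `1` or `z = i²`, and both act trivially on `F` because `φ(i)` swaps
the generators `x, y`. Hence an element `(w, q)` with `(w, q)² = 1` has `q ∈ {1, z}` and
`w² = 1`, so `w = 1` since free groups are torsion-free. Thus `(1, z)` is the only involution
of `G`, and the square of an element of order 4 is an involution.
-/

theorem ZMod.add_self_eq_zero_iff {n : ℕ} [NeZero n] {i : ZMod (2 * n)} :
    i + i = 0 ↔ i = 0 ∨ i = n := by
  obtain ⟨v, hv, rfl⟩ : ∃ v < 2 * n, (v : ZMod (2 * n)) = i :=
    ⟨i.val, i.val_lt, ZMod.natCast_zmod_val i⟩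
  have hn := NeZero.pos n
  have hdvd : 2 * n ∣ v ↔ v = 0 :=
    ⟨fun h ↦ Nat.eq_zero_of_dvd_of_lt h hv, by rintro rfl; exact dvd_zero _⟩
  rw [← Nat.cast_add, ZMod.natCast_eq_zero_iff, ZMod.natCast_eq_zero_iff, hdvd,
    ZMod.natCast_eq_natCast_iff', Nat.mod_eq_of_lt hv, Nat.mod_eq_of_lt (by omega)]
  constructor
  · rintro ⟨_ | _ | k, hk⟩ <;> [omega; omega; nlinarith]
  · rintro (rfl | rfl)
    · exact ⟨0, rfl⟩
    · exact ⟨1, by ring⟩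

theorem QuaternionGroup.sq_eq_one_iff {n : ℕ} [NeZero n] {q : QuaternionGroup n} :
    q ^ 2 = 1 ↔ q = 1 ∨ q = a n := by
  rcases q with i | i
  · rw [sq, a_mul_a, one_def, a.injEq, a.injEq, a.injEq, ZMod.add_self_eq_zero_iff]
  · have hn : (n : ZMod (2 * n)) ≠ 0 := by
      rw [Ne, ZMod.natCast_eq_zero_iff]
      exact Nat.not_dvd_of_pos_of_lt (NeZero.pos n) (by have := NeZero.pos n; omega)
    simp only [xa_sq, one_def, a.injEq, hn, reduceCtorEq, or_self]

theorem FreeGroup.mulAut_ext {α : Type*} {σ τ : MulAut (FreeGroup α)}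
    (h : ∀ a, σ (of a) = τ (of a)) : σ = τ :=
  MulEquiv.toMonoidHom_injective (ext_hom _ _ h)

theorem SemidirectProduct.eq_inr_right_of_mul_self_eq_one {N G : Type*} [Group N] [Group G]
    [IsMulTorsionFree N] {φ : G →* MulAut N} {g : N ⋊[φ] G}
    (hφ : φ g.right = 1) (hg : g * g = 1) : g = inr g.right := by
  have hleft : g.left ^ 2 = 1 ^ 2 := by
    simpa [sq, hφ] using congrArg left hg
  ext
  · simpa using pow_left_injective two_ne_zero hleft
  · rfl

open QuaternionGroup SemidirectProduct in
theorem stmt_14_general (φ : QuaternionGroup 2 →* MulAut (FreeGroup (Fin 2)))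
    (hix : φ (QuaternionGroup.a 1) (FreeGroup.of 0) = FreeGroup.of 1)
    (hiy : φ (QuaternionGroup.a 1) (FreeGroup.of 1) = FreeGroup.of 0) :
    (∀ g : FreeGroup (Fin 2) ⋊[φ] QuaternionGroup 2,
      orderOf g = 2 ↔ g = SemidirectProduct.inr ((QuaternionGroup.a 1) ^ 2)) ∧
    (∀ g : FreeGroup (Fin 2) ⋊[φ] QuaternionGroup 2,
      orderOf g = 4 → g ^ 2 = SemidirectProduct.inr ((QuaternionGroup.a 1) ^ 2)) := by
  have hφz : φ (a 1 ^ 2) = 1 :=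
    FreeGroup.mulAut_ext fun x ↦ by
      rw [sq, map_mul, MulAut.mul_apply, MulAut.one_apply]
      fin_cases x
      exacts [(congrArg _ hix).trans hiy, (congrArg _ hiy).trans hix]
  have hz : (inr (a 1 ^ 2) : FreeGroup (Fin 2) ⋊[φ] QuaternionGroup 2) ≠ 1 :=
    fun h ↦ absurd (inr_injective (h.trans (map_one _).symm)) (by decide)
  have hinv (g : FreeGroup (Fin 2) ⋊[φ] QuaternionGroup 2) :
      g * g = 1 ↔ g = 1 ∨ g = inr (a 1 ^ 2) := by
    refine ⟨fun hg ↦ ?_, ?_⟩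
    · have hright : g.right ^ 2 = 1 := by simpa [sq] using congrArg right hg
      rw [QuaternionGroup.sq_eq_one_iff, ← a_one_pow] at hright
      rcases hright with h | h
      · exact .inl <| by rw [eq_inr_right_of_mul_self_eq_one (by rw [h, map_one]) hg, h, map_one]
      · exact .inr <| by rw [eq_inr_right_of_mul_self_eq_one (by rw [h, hφz]) hg, h]
    · rintro (rfl | rfl)
      · exact one_mul 1
      · rw [← map_mul, ← sq, ← pow_mul, a_one_pow_n, map_one]
  have hord2 (g : FreeGroup (Fin 2) ⋊[φ] QuaternionGroup 2) :
      orderOf g = 2 ↔ g = inr (a 1 ^ 2) := by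
    rw [orderOf_eq_prime_iff, sq, hinv]
    exact ⟨fun ⟨h, h1⟩ ↦ h.resolve_left h1, fun h ↦ ⟨Or.inr h, h ▸ hz⟩⟩
  refine ⟨hord2, fun g hg ↦ (hord2 _).1 ?_⟩
  rw [orderOf_pow_of_dvd two_ne_zero (by rw [hg]; norm_num), hg]

/-- In `G = F ⋊_φ Q8` as in the paper, the unique element of order 2 is `(1, z)`
where `z = i²` is the unique involution of `Q8`, and every element of order 4
squares to `(1, z)`. -/
theorem stmt_14 (φ : QuaternionGroup 2 →* MulAut (FreeGroup (Fin 2)))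
    (hix : φ (QuaternionGroup.a 1) (FreeGroup.of 0) = FreeGroup.of 1)
    (hiy : φ (QuaternionGroup.a 1) (FreeGroup.of 1) = FreeGroup.of 0)
    (hjx : φ (QuaternionGroup.xa 0) (FreeGroup.of 0) = (FreeGroup.of 1)⁻¹)
    (hjy : φ (QuaternionGroup.xa 0) (FreeGroup.of 1) = (FreeGroup.of 0)⁻¹) :
    (∀ g : FreeGroup (Fin 2) ⋊[φ] QuaternionGroup 2,
      orderOf g = 2 ↔ g = SemidirectProduct.inr ((QuaternionGroup.a 1) ^ 2)) ∧
    (∀ g : FreeGroup (Fin 2) ⋊[φ] QuaternionGroup 2,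
      orderOf g = 4 → g ^ 2 = SemidirectProduct.inr ((QuaternionGroup.a 1) ^ 2)) :=
  stmt_14_general φ hix hiy
end

section
/- In the semidirect product G = F ⋊_φ Q8 as above, the non-trivial torsion of G is exactly {2, 4}: every element of finite order > 1 has order 2 or 4, and elements of both orders exist. -/
/-!
The projection `F ⋊ Q8 → Q8` has kernel `F`, which is torsion-free, so it preserves the order of
every element of finite order. Hence the non-trivial torsion of `F ⋊ Q8` is that of `Q8`, whose
non-trivial elements have order 2 or 4; both orders are realised inside the complement `Q8`.
-/

namespace SemidirectProduct

variable {N G : Type*} [Group N] [Group G] {φ : G →* MulAut N}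

theorem orderOf_rightHom [IsMulTorsionFree N] {g : N ⋊[φ] G} (hg : IsOfFinOrder g) :
    orderOf (rightHom g) = orderOf g := by
  refine dvd_antisymm (orderOf_map_dvd _ g) (orderOf_dvd_of_pow_eq_one ?_)
  have hker : g ^ orderOf (rightHom g) ∈ (rightHom : N ⋊[φ] G →* G).ker := by
    rw [MonoidHom.mem_ker, map_pow, pow_orderOf_eq_one]
  rw [← range_inl_eq_ker_rightHom] at hker
  obtain ⟨n, hn⟩ := hker
  have hn_fin : IsOfFinOrder n := by
    rw [← (inl_injective (φ := φ)).isOfFinOrder_iff, hn]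
    exact hg.pow
  rw [← hn, hn_fin.eq_one', map_one]

end SemidirectProduct

namespace QuaternionGroup

theorem orderOf_eq_two_or_four {q : QuaternionGroup 2} (hq : q ≠ 1) :
    orderOf q = 2 ∨ orderOf q = 4 := by
  have hdvd : orderOf q ∣ 4 := by
    simpa [QuaternionGroup.exponent] using Monoid.order_dvd_exponent q
  have hne : orderOf q ≠ 1 := by rwa [Ne, orderOf_eq_one_iff]
  have hpos := orderOf_pos q
  have hle := Nat.le_of_dvd (by norm_num) hdvd
  interval_cases h : orderOf q <;> simp_all

end QuaternionGroup

open SemidirectProduct QuaternionGroup in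
theorem stmt_15_general (φ : QuaternionGroup 2 →* MulAut (FreeGroup (Fin 2))) :
    (∀ g : FreeGroup (Fin 2) ⋊[φ] QuaternionGroup 2,
      IsOfFinOrder g → g ≠ 1 → orderOf g = 2 ∨ orderOf g = 4) ∧
    (∃ g : FreeGroup (Fin 2) ⋊[φ] QuaternionGroup 2, orderOf g = 2) ∧
    (∃ g : FreeGroup (Fin 2) ⋊[φ] QuaternionGroup 2, orderOf g = 4) := by
  refine ⟨fun g hg hg1 => ?_, ⟨inr (a 2), ?_⟩, ⟨inr (xa 0), ?_⟩⟩
  · rw [← orderOf_rightHom hg]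
    refine orderOf_eq_two_or_four fun h => hg1 ?_
    rw [← orderOf_eq_one_iff, ← orderOf_rightHom hg, h, orderOf_one]
  · rw [orderOf_injective _ inr_injective, orderOf_a]
    rfl
  · rw [orderOf_injective _ inr_injective, orderOf_xa]

/-- In `G = F ⋊_φ Q8` as in the paper, the non-trivial torsion is exactly {2, 4}:
every nontrivial element of finite order has order 2 or 4, and both orders occur. -/
theorem stmt_15 (φ : QuaternionGroup 2 →* MulAut (FreeGroup (Fin 2)))
    (hix : φ (QuaternionGroup.a 1) (FreeGroup.of 0) = FreeGroup.of 1)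
    (hiy : φ (QuaternionGroup.a 1) (FreeGroup.of 1) = FreeGroup.of 0)
    (hjx : φ (QuaternionGroup.xa 0) (FreeGroup.of 0) = (FreeGroup.of 1)⁻¹)
    (hjy : φ (QuaternionGroup.xa 0) (FreeGroup.of 1) = (FreeGroup.of 0)⁻¹) :
    (∀ g : FreeGroup (Fin 2) ⋊[φ] QuaternionGroup 2,
      IsOfFinOrder g → g ≠ 1 → orderOf g = 2 ∨ orderOf g = 4) ∧
    (∃ g : FreeGroup (Fin 2) ⋊[φ] QuaternionGroup 2, orderOf g = 2) ∧
    (∃ g : FreeGroup (Fin 2) ⋊[φ] QuaternionGroup 2, orderOf g = 4) :=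
  stmt_15_general φ
end

section
/- Let G be a group whose center is cyclic of order 2 generated by Δ, and suppose every element of G of finite order has order dividing 4n or 4(n−1), with elements of order exactly 4n and 4(n−1) existing, where n ≥ 2. Then Δ has a k-th root in G (an element α with α^k = Δ) if and only if k divides 2n or 2(n−1). -/
lemma root_aux {G : Type*} [Group G] (Δ g : G) (hΔord : orderOf Δ = 2)
    (huniq : ∀ h : G, orderOf h = 2 → h = Δ)
    (m k : ℕ) (hm : 1 ≤ m) (hg : orderOf g = 4 * m) (hk : 0 < k) (hdvd : k ∣ 2 * m) :
    ∃ α : G, α ^ k = Δ ∧ ∀ j : ℕ, 1 ≤ j → j < k → α ^ j ≠ Δ := by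
  obtain ⟨c, hc⟩ := hdvd
  have hc0 : 0 < c := by
    rcases Nat.eq_zero_or_pos c with h | h
    · subst h; simp at hc; omega
    · exact h
  set α := g ^ c with hα
  have hcd : c ∣ orderOf g := by
    rw [hg]; exact ⟨2 * k, by rw [show (4:ℕ)*m = 2*(2*m) by ring, hc]; ring⟩
  have hordα : orderOf α = 2 * k := by
    rw [hα, orderOf_pow' g hc0.ne', Nat.gcd_eq_right hcd, hg,
      show 4 * m = (2 * k) * c by rw [show (4:ℕ)*m = 2*(2*m) by ring, hc]; ring, Nat.mul_div_cancel _ hc0]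
  refine ⟨α, ?_, ?_⟩
  · apply huniq
    rw [orderOf_pow' α hk.ne', hordα, Nat.gcd_eq_right ⟨2, by ring⟩,
      Nat.mul_div_cancel _ hk]
  · intro j hj1 hjk hcontra
    have h1 : α ^ (2 * j) = 1 := by
      rw [mul_comm, pow_mul, hcontra, ← hΔord, pow_orderOf_eq_one]
    have h2 : 2 * k ∣ 2 * j := by
      rw [← hordα]; exact orderOf_dvd_of_pow_eq_one h1
    have : k ∣ j := (mul_dvd_mul_iff_left (two_ne_zero)).mp h2
    have := Nat.le_of_dvd (by omega) this
    omega

/-- Let `G` be a group whose center is cyclic of order 2 generated by `Δ`, `Δ` the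
unique element of order 2, such that the torsion orders of `G` are exactly the
divisors of `4n` together with the divisors of `4(n-1)` (`n ≥ 2`). Then `Δ` has a
`k`-th root in `G` if and only if `k` divides `2n` or `2(n-1)`. -/
theorem stmt_16 {G : Type*} [Group G] (n : ℕ) (hn : 2 ≤ n) (Δ : G)
    (hΔord : orderOf Δ = 2)
    (hcen : Subgroup.center G = Subgroup.zpowers Δ)
    (huniq : ∀ g : G, orderOf g = 2 → g = Δ)
    (htors : ∀ g : G, IsOfFinOrder g → (orderOf g ∣ 4 * n ∨ orderOf g ∣ 4 * (n - 1)))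
    (hex1 : ∃ g : G, orderOf g = 4 * n)
    (hex2 : ∃ g : G, orderOf g = 4 * (n - 1))
    (k : ℕ) (hk : 0 < k) :
    (∃ α : G, α ^ k = Δ ∧ ∀ j : ℕ, 1 ≤ j → j < k → α ^ j ≠ Δ) ↔
      (k ∣ 2 * n ∨ k ∣ 2 * (n - 1)) := by
  constructor
  · rintro ⟨α, hαk, hmin⟩
    have h2k : α ^ (2 * k) = 1 := by
      rw [mul_comm, pow_mul, hαk, ← hΔord, pow_orderOf_eq_one]
    have hfin : IsOfFinOrder α :=
      isOfFinOrder_iff_pow_eq_one.mpr ⟨2 * k, by omega, h2k⟩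
    have hd0 : 0 < orderOf α := hfin.orderOf_pos
    have hdiv2 : orderOf (α ^ k) = 2 := by rw [hαk, hΔord]
    rw [orderOf_pow' α hk.ne'] at hdiv2
    set d := orderOf α with hdd
    set g0 := Nat.gcd d k with hg0
    have hdeq : d = 2 * g0 := by
      have := Nat.eq_mul_of_div_eq_right (Nat.gcd_dvd_left d k) hdiv2
      omega
    have hg00 : 0 < g0 := by omega
    have hg0k : g0 ∣ k := Nat.gcd_dvd_right d k
    have hαg0 : α ^ g0 = Δ := by
      apply huniq
      rw [orderOf_pow' α hg00.ne', ← hdd,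
        Nat.gcd_eq_right ⟨2, by rw [hdeq]; ring⟩, hdeq, Nat.mul_div_cancel _ hg00]
    have hge : ¬ g0 < k := fun h => hmin g0 hg00 h hαg0
    have hle : g0 ≤ k := Nat.le_of_dvd hk hg0k
    have hg0eq : g0 = k := by omega
    have hd2k : d = 2 * k := by omega
    rcases htors α hfin with h | h
    · left
      rw [← hdd, hd2k, show 4 * n = 2 * (2 * n) by ring] at h
      exact (mul_dvd_mul_iff_left (two_ne_zero)).mp h
    · right
      rw [← hdd, hd2k, show 4 * (n - 1) = 2 * (2 * (n - 1)) by ring] at h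
      exact (mul_dvd_mul_iff_left (two_ne_zero)).mp h
  · rintro (h | h)
    · obtain ⟨g, hg⟩ := hex1
      exact root_aux Δ g hΔord huniq n k (by omega) hg hk h
    · obtain ⟨g, hg⟩ := hex2
      exact root_aux Δ g hΔord huniq (n - 1) k (by omega) hg hk h
end
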